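/- Let G be an abelian group and X ⊆ G with X = −X and 0 ∈ X. Let Σ_j X denote the j-fold sumset of X. Suppose Y ⊆ Σ_k X for some positive integer k. Then for all positive integers m, n with n ≥ 4km and all y ∈ Y: if 2m·y ∈ Σ_m X, then n·y ∈ Σ_n X. -/
import Mathlib


/-- The j-fold sumset of X. -/
def sumsetN {G : Type*} [AddCommGroup G] (j : ℕ) (X : Set G) : Set G :=
  {y : G | ∃ a : Fin j → G, (∀ i, a i ∈ X) ∧ y = ∑ i, a i}

lemma sumsetN_zero_mem {G : Type*} [AddCommGroup G] {X : Set G} (h0 : (0:G) ∈ X) (j : ℕ) :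
    (0 : G) ∈ sumsetN j X :=
  ⟨fun _ => 0, fun _ => h0, by simp⟩

lemma sumsetN_add_mem {G : Type*} [AddCommGroup G] {X : Set G} {i j : ℕ} {a b : G}
    (ha : a ∈ sumsetN i X) (hb : b ∈ sumsetN j X) : a + b ∈ sumsetN (i + j) X := by
  obtain ⟨f, hf, rfl⟩ := ha
  obtain ⟨g, hg, rfl⟩ := hb
  refine ⟨Fin.append f g, ?_, ?_⟩
  · intro t
    refine Fin.addCases (fun t => ?_) (fun t => ?_) t
    · simpa [Fin.append_left] using hf t
    · simpa [Fin.append_right] using hg t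
  · rw [Fin.sum_univ_add]
    simp [Fin.append_left, Fin.append_right]

lemma sumsetN_mono {G : Type*} [AddCommGroup G] {X : Set G} (h0 : (0:G) ∈ X) {i j : ℕ}
    (hij : i ≤ j) : sumsetN i X ⊆ sumsetN j X := by
  intro a ha
  have := sumsetN_add_mem ha (sumsetN_zero_mem h0 (j - i)) (X := X)
  rwa [add_zero, Nat.add_sub_cancel' hij] at this

lemma sumsetN_nsmul_mem {G : Type*} [AddCommGroup G] {X : Set G} {j : ℕ} {y : G}
    (hy : y ∈ sumsetN j X) (r : ℕ) : r • y ∈ sumsetN (r * j) X := by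
  induction r with
  | zero =>
      rw [Nat.zero_mul, zero_smul]
      exact ⟨fun t => t.elim0, fun t => t.elim0, by simp⟩
  | succ r ih =>
      have := sumsetN_add_mem ih hy
      rwa [show r * j + j = (r+1) * j by ring, ← succ_nsmul] at this

/-- Let X = -X, 0 ∈ X, Y ⊆ Σ_k X.  For all positive m, n with n ≥ 4km and
y ∈ Y: if 2m·y ∈ Σ_m X then n·y ∈ Σ_n X. -/
theorem stmt_6 {G : Type*} [AddCommGroup G] (X Y : Set G)
    (hsym : X = -X) (h0 : (0 : G) ∈ X)
    (k : ℕ) (hk : 0 < k) (hY : Y ⊆ sumsetN k X) :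
    ∀ m n : ℕ, 0 < m → 0 < n → 4 * k * m ≤ n →
      ∀ y ∈ Y, (2 * m) • y ∈ sumsetN m X → n • y ∈ sumsetN n X := by
  intro m n hm hn hn4 y hy h2m
  set q := n / (2 * m) with hq
  set r := n % (2 * m) with hr
  have h2m0 : 0 < 2 * m := by omega
  have hnr : n = 2 * m * q + r := (Nat.div_add_mod n (2*m)).symm
  have hrlt : r < 2 * m := Nat.mod_lt _ h2m0
  have hqk : 2 * k ≤ q := by nlinarith
  have h1 : q • ((2 * m) • y) ∈ sumsetN (q * m) X := sumsetN_nsmul_mem h2m q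
  have h2 : r • y ∈ sumsetN (r * k) X := sumsetN_nsmul_mem (hY hy) r
  have h3 : q • ((2 * m) • y) + r • y ∈ sumsetN (q * m + r * k) X := sumsetN_add_mem h1 h2
  have heq : q • ((2 * m) • y) + r • y = n • y := by
    rw [← smul_assoc, smul_eq_mul, ← add_nsmul]
    congr 1
    rw [hnr]; ring
  rw [heq] at h3
  have hle : q * m + r * k ≤ n := by nlinarith
  exact sumsetN_mono h0 hle h3
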